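/- arXiv:1608.02695 — 3 statements merged into one kernel-verified Lean document; each statement's English description precedes it below -/
import Mathlib

section
/- Let q > 0 and Q ∈ [0,1). If a POVM (M_0,M_1,…,M_N) satisfies tr(ρ_0 M_0) = Q and attains P̄_cor = P̄_cor^opt(q), then P_cor^opt(Q) = P̄_cor^opt(q) − qQ, and this same POVM attains P_cor^opt(Q). -/
/-!
The penalised figure of merit splits as `P̄_cor = q·P_I + P_cor`. If `M` maximises it over all
POVMs, then every POVM `M'` with `P_I(M') = P_I(M) = Q` has
`P_cor(M') = P̄_cor(M') - qQ ≤ P̄_cor(M) - qQ = P_cor(M)`, so `M` is optimal for the constrained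
problem with value `P̄_cor^opt(q) - qQ`. Since the optima are defined as suprema, the only analytic
input is that `P̄_cor` is bounded on POVMs, which follows from `tr(A M_i) ≤ tr A` for `A ≥ 0`
and `0 ≤ M_i ≤ 1`.
-/

open Matrix ComplexOrder

noncomputable section

namespace FRIR

variable {d N : ℕ}

/-- A POVM with `N+1` outcomes on a `d`-dimensional system: `M 0` is the
inconclusive outcome, `M i.succ` is the conclusive outcome for state `i`. -/
def IsPOVM (M : Fin (N + 1) → Matrix (Fin d) (Fin d) ℂ) : Prop :=
  (∀ i, (M i).PosSemidef) ∧ ∑ i, M i = 1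

/-- `ρ₀ = ∑ i q_i ρ_i`. -/
def rho0 (q : Fin N → ℝ) (ρ : Fin N → Matrix (Fin d) (Fin d) ℂ) :
    Matrix (Fin d) (Fin d) ℂ :=
  ∑ i, (q i : ℂ) • ρ i

/-- The probability of the inconclusive result, `P_I = tr(ρ₀ M₀)`. -/
def PIof (q : Fin N → ℝ) (ρ : Fin N → Matrix (Fin d) (Fin d) ℂ)
    (M : Fin (N + 1) → Matrix (Fin d) (Fin d) ℂ) : ℝ :=
  (Matrix.trace (rho0 q ρ * M 0)).re

/-- `P_cor = ∑ i q_i tr(ρ_i M_i)`. -/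
def Pcor (q : Fin N → ℝ) (ρ : Fin N → Matrix (Fin d) (Fin d) ℂ)
    (M : Fin (N + 1) → Matrix (Fin d) (Fin d) ℂ) : ℝ :=
  ∑ i : Fin N, q i * (Matrix.trace (ρ i * M i.succ)).re

/-- `P̄_cor = q·tr(ρ₀M₀) + ∑ i q_i tr(ρ_i M_i)`. -/
def PbarCor (qv : ℝ) (q : Fin N → ℝ) (ρ : Fin N → Matrix (Fin d) (Fin d) ℂ)
    (M : Fin (N + 1) → Matrix (Fin d) (Fin d) ℂ) : ℝ :=
  qv * PIof q ρ M + Pcor q ρ M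

/-- `P̄_cor^opt(q)`: the maximal value of `P̄_cor` over all POVMs. -/
def PbarOpt (qv : ℝ) (q : Fin N → ℝ) (ρ : Fin N → Matrix (Fin d) (Fin d) ℂ) : ℝ :=
  sSup {x : ℝ | ∃ M, IsPOVM M ∧ PbarCor qv q ρ M = x}

/-- `P_cor^opt(Q)`: the maximal value of `P_cor` over POVMs with `P_I = Q`. -/
def PcorOpt (Q : ℝ) (q : Fin N → ℝ) (ρ : Fin N → Matrix (Fin d) (Fin d) ℂ) : ℝ :=
  sSup {x : ℝ | ∃ M, IsPOVM M ∧ PIof q ρ M = Q ∧ Pcor q ρ M = x}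

/-- `P_I(q) = { tr(ρ₀M₀) : POVMs attaining P̄_cor^opt(q) }`. -/
def PIset (qv : ℝ) (q : Fin N → ℝ) (ρ : Fin N → Matrix (Fin d) (Fin d) ℂ) : Set ℝ :=
  {Q : ℝ | ∃ M, IsPOVM M ∧ PbarCor qv q ρ M = PbarOpt qv q ρ ∧ PIof q ρ M = Q}

end FRIR

namespace Matrix.PosSemidef

variable {𝕜 n : Type*} [RCLike 𝕜] [Fintype n] {A B : Matrix n n 𝕜}

open scoped MatrixOrder in
theorem trace_mul_nonneg (hA : A.PosSemidef) (hB : B.PosSemidef) : 0 ≤ (A * B).trace := by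
  classical
  obtain ⟨C, rfl⟩ := CStarAlgebra.nonneg_iff_eq_star_mul_self.mp hA.nonneg
  rw [mul_assoc, trace_mul_comm]
  exact (hB.mul_mul_conjTranspose_same C).trace_nonneg

theorem trace_mul_le_trace [DecidableEq n] (hA : A.PosSemidef) (hB : (1 - B).PosSemidef) :
    (A * B).trace ≤ A.trace := by
  have := hA.trace_mul_nonneg hB
  rwa [mul_sub, mul_one, trace_sub, sub_nonneg] at this

end Matrix.PosSemidef

namespace FRIR

variable {d N : ℕ} {qv : ℝ} {q : Fin N → ℝ} {ρ : Fin N → Matrix (Fin d) (Fin d) ℂ}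
  {M : Fin (N + 1) → Matrix (Fin d) (Fin d) ℂ}

theorem IsPOVM.posSemidef_one_sub (hM : IsPOVM M) (i : Fin (N + 1)) : (1 - M i).PosSemidef := by
  rw [← hM.2, ← Finset.sum_erase_eq_sub (Finset.mem_univ i)]
  exact posSemidef_sum _ fun j _ ↦ hM.1 j

theorem PbarCor_le (hqv : 0 ≤ qv) (hq : ∀ i, 0 ≤ q i) (hρ : ∀ i, (ρ i).PosSemidef)
    (hρ0 : (rho0 q ρ).PosSemidef) (hM : IsPOVM M) :
    PbarCor qv q ρ M ≤ qv * (rho0 q ρ).trace.re + ∑ i, q i * (ρ i).trace.re := by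
  unfold PbarCor PIof Pcor
  gcongr with i
  · exact hρ0.trace_mul_le_trace (hM.posSemidef_one_sub 0)
  · exact hq i
  · exact (hρ i).trace_mul_le_trace (hM.posSemidef_one_sub i.succ)

theorem PbarCor_le_PbarOpt (hqv : 0 ≤ qv) (hq : ∀ i, 0 ≤ q i) (hρ : ∀ i, (ρ i).PosSemidef)
    (hρ0 : (rho0 q ρ).PosSemidef) (hM : IsPOVM M) : PbarCor qv q ρ M ≤ PbarOpt qv q ρ :=
  le_csSup ⟨_, fun _ ⟨_, hM', h⟩ ↦ h ▸ PbarCor_le hqv hq hρ hρ0 hM'⟩ ⟨M, hM, rfl⟩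

theorem stmt0_general {d N : ℕ}
    (q : Fin N → ℝ) (ρ : Fin N → Matrix (Fin d) (Fin d) ℂ)
    (hq : ∀ i, 0 < q i)
    (hρ : ∀ i, (ρ i).PosSemidef)
    (hρ0 : (rho0 q ρ).PosDef)
    (qv Q : ℝ) (hqv : 0 < qv)
    (M : Fin (N + 1) → Matrix (Fin d) (Fin d) ℂ)
    (hM : IsPOVM M)
    (hPI : PIof q ρ M = Q)
    (hopt : PbarCor qv q ρ M = PbarOpt qv q ρ) :
    PcorOpt Q q ρ = PbarOpt qv q ρ - qv * Q ∧ Pcor q ρ M = PcorOpt Q q ρ := by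
  have hvalue : Pcor q ρ M = PbarOpt qv q ρ - qv * Q := by
    rw [← hopt, PbarCor, hPI, add_sub_cancel_left]
  have hgreatest : IsGreatest {x | ∃ M', IsPOVM M' ∧ PIof q ρ M' = Q ∧ Pcor q ρ M' = x}
      (Pcor q ρ M) := by
    refine ⟨⟨M, hM, hPI, rfl⟩, ?_⟩
    rintro _ ⟨M', hM', hPI', rfl⟩
    have := PbarCor_le_PbarOpt hqv.le (fun i ↦ (hq i).le) hρ hρ0.posSemidef hM'
    rw [← hopt, PbarCor, PbarCor, hPI, hPI'] at this
    linarith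
  have hPcorOpt : PcorOpt Q q ρ = Pcor q ρ M := hgreatest.csSup_eq
  exact ⟨hPcorOpt.trans hvalue, hPcorOpt.symm⟩

/-- If a POVM has `P_I = Q` and attains `P̄_cor^opt(q)`, then
`P_cor^opt(Q) = P̄_cor^opt(q) − qQ`, and the same POVM attains `P_cor^opt(Q)`. -/
theorem stmt0 {d N : ℕ} (hd : 0 < d) (hN : 0 < N)
    (q : Fin N → ℝ) (ρ : Fin N → Matrix (Fin d) (Fin d) ℂ)
    (hq : ∀ i, 0 < q i) (hqsum : ∑ i, q i = 1)
    (hρ : ∀ i, (ρ i).PosSemidef) (htr : ∀ i, (ρ i).trace = 1)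
    (hρ0 : (rho0 q ρ).PosDef)
    (qv Q : ℝ) (hqv : 0 < qv) (hQ : Q ∈ Set.Ico (0 : ℝ) 1)
    (M : Fin (N + 1) → Matrix (Fin d) (Fin d) ℂ)
    (hM : IsPOVM M)
    (hPI : PIof q ρ M = Q)
    (hopt : PbarCor qv q ρ M = PbarOpt qv q ρ) :
    PcorOpt Q q ρ = PbarOpt qv q ρ - qv * Q ∧ Pcor q ρ M = PcorOpt Q q ρ :=
  stmt0_general q ρ hq hρ hρ0 qv Q hqv M hM hPI hopt

end FRIR
end
end

section
/- For every q > 0, the set P_I(q) is a convex subset of the interval [0,1]. -/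
/-!
`P̄_cor` and `tr(ρ₀M₀)` are real-linear in the POVM `M`, and POVMs form a convex set. The optimal
POVMs are the POVMs on a level set of the linear functional `P̄_cor`, hence convex, and `P_I(q)` is
their image under a linear map. For the bounds, `0 ≤ M₀ ≤ 1` and `ρ₀` is a density operator, and
`tr(AB) = tr(√A B √A) ≥ 0` for positive semidefinite `A`, `B`.
-/

open Matrix ComplexOrder

noncomputable section

namespace FRIR

variable {d N : ℕ}

open scoped MatrixOrder in
lemma _root_.Matrix.PosSemidef.trace_mul_nonneg_s1 {n 𝕜 : Type*} [Fintype n] [DecidableEq n]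
    [RCLike 𝕜] {A B : Matrix n n 𝕜} (hA : A.PosSemidef) (hB : B.PosSemidef) :
    0 ≤ (A * B).trace := by
  have hsqrt : (CFC.sqrt A).IsHermitian := (CFC.sqrt_nonneg A).posSemidef.isHermitian
  calc 0 ≤ (CFC.sqrt A * B * CFC.sqrt A).trace := by
        simpa [hsqrt.eq] using (hB.conjTranspose_mul_mul_same (CFC.sqrt A)).trace_nonneg
    _ = (A * B).trace := by
        rw [trace_mul_cycle, CFC.sqrt_mul_sqrt_self A hA.nonneg]

lemma _root_.Matrix.PosSemidef.re_trace_mul_mem_Icc {n 𝕜 : Type*} [Fintype n] [DecidableEq n]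
    [RCLike 𝕜] {ρ E : Matrix n n 𝕜} (hρ : ρ.PosSemidef) (htr : ρ.trace = 1)
    (hE : E.PosSemidef) (hE' : (1 - E).PosSemidef) :
    RCLike.re (ρ * E).trace ∈ Set.Icc 0 1 := by
  have hle : (ρ * E).trace ≤ 1 := by
    simpa [mul_sub, trace_sub, htr] using hρ.trace_mul_nonneg_s1 hE'
  exact ⟨by simpa using RCLike.re_le_re (hρ.trace_mul_nonneg_s1 hE),
    by simpa using RCLike.re_le_re hle⟩

lemma IsPOVM.one_sub_posSemidef {M : Fin (N + 1) → Matrix (Fin d) (Fin d) ℂ} (hM : IsPOVM M)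
    (i : Fin (N + 1)) : (1 - M i).PosSemidef := by
  rw [← hM.2, ← Finset.sum_erase_eq_sub (Finset.mem_univ i)]
  exact posSemidef_sum _ fun j _ => hM.1 j

lemma convex_setOf_isPOVM :
    Convex ℝ {M : Fin (N + 1) → Matrix (Fin d) (Fin d) ℂ | IsPOVM M} := by
  rintro M ⟨hM, hMsum⟩ M' ⟨hM', hM'sum⟩ a b ha hb hab
  refine ⟨fun i => ((hM i).smul ha).add ((hM' i).smul hb), ?_⟩
  simp only [Pi.add_apply, Pi.smul_apply, Finset.sum_add_distrib, ← Finset.smul_sum, hMsum,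
    hM'sum, ← add_smul, hab, one_smul]

lemma trace_rho0 {q : Fin N → ℝ} {ρ : Fin N → Matrix (Fin d) (Fin d) ℂ} (hqsum : ∑ i, q i = 1)
    (htr : ∀ i, (ρ i).trace = 1) : (rho0 q ρ).trace = 1 := by
  simp [rho0, trace_sum, htr, ← Complex.ofReal_sum, hqsum]

lemma isLinearMap_PIof (q : Fin N → ℝ) (ρ : Fin N → Matrix (Fin d) (Fin d) ℂ) :
    IsLinearMap ℝ (PIof q ρ) :=
  ⟨fun M M' => by simp [PIof, mul_add], fun c M => by simp [PIof]⟩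

lemma isLinearMap_Pcor (q : Fin N → ℝ) (ρ : Fin N → Matrix (Fin d) (Fin d) ℂ) :
    IsLinearMap ℝ (Pcor q ρ) :=
  ⟨fun M M' => by simp [Pcor, mul_add, Finset.sum_add_distrib],
   fun c M => by simp [Pcor, Finset.mul_sum, mul_left_comm]⟩

lemma isLinearMap_PbarCor (qv : ℝ) (q : Fin N → ℝ) (ρ : Fin N → Matrix (Fin d) (Fin d) ℂ) :
    IsLinearMap ℝ (PbarCor qv q ρ) :=
  ⟨fun M M' => by
    simp only [PbarCor, (isLinearMap_PIof q ρ).map_add, (isLinearMap_Pcor q ρ).map_add]; ring,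
   fun c M => by
    simp only [PbarCor, (isLinearMap_PIof q ρ).map_smul, (isLinearMap_Pcor q ρ).map_smul,
      smul_eq_mul]; ring⟩

lemma PIset_eq_image (qv : ℝ) (q : Fin N → ℝ) (ρ : Fin N → Matrix (Fin d) (Fin d) ℂ) :
    PIset qv q ρ = PIof q ρ '' {M | IsPOVM M ∧ PbarCor qv q ρ M = PbarOpt qv q ρ} := by
  ext Q
  simp [PIset, and_assoc]

theorem stmt1_general {d N : ℕ}
    (q : Fin N → ℝ) (ρ : Fin N → Matrix (Fin d) (Fin d) ℂ)
    (hqsum : ∑ i, q i = 1)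
    (htr : ∀ i, (ρ i).trace = 1)
    (hρ0 : (rho0 q ρ).PosDef)
    (qv : ℝ) :
    Convex ℝ (PIset qv q ρ) ∧ PIset qv q ρ ⊆ Set.Icc (0 : ℝ) 1 := by
  rw [PIset_eq_image]
  have hopt : Convex ℝ {M | IsPOVM M ∧ PbarCor qv q ρ M = PbarOpt qv q ρ} :=
    convex_setOf_isPOVM.inter (convex_hyperplane (isLinearMap_PbarCor qv q ρ) _)
  refine ⟨hopt.is_linear_image (isLinearMap_PIof q ρ), ?_⟩
  rintro _ ⟨M, ⟨hM, -⟩, rfl⟩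
  exact hρ0.posSemidef.re_trace_mul_mem_Icc (trace_rho0 hqsum htr) (hM.1 0)
    (hM.one_sub_posSemidef 0)

/-- For every `q > 0`, `P_I(q)` is a convex subset of `[0,1]`. -/
theorem stmt1 {d N : ℕ} (hd : 0 < d) (hN : 0 < N)
    (q : Fin N → ℝ) (ρ : Fin N → Matrix (Fin d) (Fin d) ℂ)
    (hq : ∀ i, 0 < q i) (hqsum : ∑ i, q i = 1)
    (hρ : ∀ i, (ρ i).PosSemidef) (htr : ∀ i, (ρ i).trace = 1)
    (hρ0 : (rho0 q ρ).PosDef)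
    (qv : ℝ) (hqv : 0 < qv) :
    Convex ℝ (PIset qv q ρ) ∧ PIset qv q ρ ⊆ Set.Icc (0 : ℝ) 1 :=
  stmt1_general q ρ hqsum htr hρ0 qv

end FRIR
end
end

section
/- If 0 < q < 1/N, then every POVM (M_0,M_1,…,M_N) attaining P̄_cor = P̄_cor^opt(q) has M_0 = 0; consequently P_I(q) = {0}. -/
/-!
Dissolving the inconclusive element `M₀` of a POVM evenly into the `N` conclusive ones,
`Mᵢ ↦ Mᵢ + M₀ / N`, gives again a POVM; it has `P_I = 0`, and since `ρ₀ = ∑ qᵢ ρᵢ` its value of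
`P̄_cor` is larger by `(1/N - q) tr(ρ₀ M₀)`. For `q < 1/N` an optimal POVM therefore has
`tr(ρ₀ M₀) = 0`, and for positive definite `ρ₀` this forces `M₀ = 0`. Optimal POVMs exist because
the POVMs form a compact set (each element lies between `0` and `1`), so `P_I(q)` is exactly `{0}`.
-/

open Matrix ComplexOrder

noncomputable section

open scoped MatrixOrder

namespace Matrix

variable {n 𝕜 : Type*} [Fintype n] [RCLike 𝕜] {A B : Matrix n n 𝕜}

theorem PosSemidef.trace_mul_nonneg_s3 (hA : A.PosSemidef) (hB : B.PosSemidef) :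
    0 ≤ (A * B).trace := by
  classical
  obtain ⟨C, rfl⟩ := CStarAlgebra.nonneg_iff_eq_star_mul_self.mp hB.nonneg
  rw [← Matrix.mul_assoc, trace_mul_cycle]
  exact (hA.mul_mul_conjTranspose_same C).trace_nonneg

theorem PosDef.eq_zero_of_trace_mul_eq_zero (hA : A.PosDef) (hB : B.PosSemidef)
    (h : (A * B).trace = 0) : B = 0 := by
  classical
  set S := CFC.sqrt A
  have hS : IsUnit S := CFC.isUnit_sqrt_iff_isStrictlyPositive.mpr hA.isStrictlyPositive
  have hSBS : (S * B * S).PosSemidef := by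
    have := hB.conjTranspose_mul_mul_same S
    rwa [(CFC.sqrt_nonneg A).posSemidef.isHermitian.eq] at this
  have hzero : S * B * S = 0 := by
    rw [← hSBS.trace_eq_zero_iff, trace_mul_cycle, CFC.sqrt_mul_sqrt_self A hA.posSemidef.nonneg,
      h]
  rwa [hS.mul_left_eq_zero, hS.mul_right_eq_zero] at hzero

open scoped Norms.L2Operator in
theorem isCompact_setOf_posSemidef_sum_eq_one {ι : Type*} [Fintype ι] [DecidableEq n] :
    IsCompact {M : ι → Matrix n n ℂ | (∀ i, (M i).PosSemidef) ∧ ∑ i, M i = 1} := by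
  simp only [← nonneg_iff_posSemidef]
  refine Metric.isCompact_of_isClosed_isBounded ?_ ?_
  · rw [Set.ofPred_and, Set.ofPred_forall]
    have hsum : IsClosed {M : ι → Matrix n n ℂ | ∑ i, M i = 1} :=
      isClosed_eq (by fun_prop) continuous_const
    exact (isClosed_iInter fun i =>
      CStarAlgebra.isClosed_nonneg.preimage (continuous_apply i)).inter hsum
  · refine (Metric.isBounded_closedBall (x := 0) (r := ‖(1 : Matrix n n ℂ)‖)).subset ?_
    rintro M ⟨hM, hsum⟩
    refine mem_closedBall_zero_iff.mpr ((pi_norm_le_iff_of_nonneg (norm_nonneg _)).mpr fun i => ?_)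
    refine CStarAlgebra.norm_le_norm_of_nonneg_of_le (hM i) ?_
    exact hsum ▸ Finset.single_le_sum (fun j _ => hM j) (Finset.mem_univ i)

end Matrix

namespace FRIR

variable {d N : ℕ} {qv : ℝ} {q : Fin N → ℝ} {ρ : Fin N → Matrix (Fin d) (Fin d) ℂ}
  {M : Fin (N + 1) → Matrix (Fin d) (Fin d) ℂ}

theorem continuous_pbarCor : Continuous (PbarCor qv q ρ) := by
  unfold PbarCor PIof Pcor
  fun_prop

theorem isGreatest_pbarOpt :
    IsGreatest {x : ℝ | ∃ M, IsPOVM M ∧ PbarCor qv q ρ M = x} (PbarOpt qv q ρ) := by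
  have hnonempty : IsPOVM (Pi.single 0 1 : Fin (N + 1) → Matrix (Fin d) (Fin d) ℂ) := by
    refine ⟨fun i => ?_, by simp⟩
    rcases eq_or_ne i 0 with rfl | hi
    · simpa using PosSemidef.one
    · simpa [hi] using PosSemidef.zero
  change IsGreatest (PbarCor qv q ρ '' {M | IsPOVM M}) (sSup (PbarCor qv q ρ '' {M | IsPOVM M}))
  exact (isCompact_setOf_posSemidef_sum_eq_one.image continuous_pbarCor).isGreatest_sSup
    ⟨_, _, hnonempty, rfl⟩

theorem trace_rho0_mul (B : Matrix (Fin d) (Fin d) ℂ) :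
    (rho0 q ρ * B).trace = ∑ i, (q i : ℂ) * (ρ i * B).trace := by
  simp only [rho0, Finset.sum_mul, trace_sum, smul_mul, trace_smul, smul_eq_mul]

theorem pIof_nonneg (hρ0 : (rho0 q ρ).PosSemidef) (hM : IsPOVM M) :
    0 ≤ PIof q ρ M :=
  (Complex.nonneg_iff.mp (hρ0.trace_mul_nonneg_s3 (hM.1 0))).1

theorem inconclusive_eq_zero_of_pIof_eq_zero (hρ0 : (rho0 q ρ).PosDef) (hM : IsPOVM M)
    (h : PIof q ρ M = 0) : M 0 = 0 := by
  refine hρ0.eq_zero_of_trace_mul_eq_zero (hM.1 0) (Complex.ext h ?_)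
  exact (Complex.nonneg_iff.mp (hρ0.posSemidef.trace_mul_nonneg_s3 (hM.1 0))).2.symm

def redistribute (M : Fin (N + 1) → Matrix (Fin d) (Fin d) ℂ) :
    Fin (N + 1) → Matrix (Fin d) (Fin d) ℂ :=
  Fin.cons 0 fun i => M i.succ + (N : ℝ)⁻¹ • M 0

theorem isPOVM_redistribute (hN : 0 < N) (hM : IsPOVM M) : IsPOVM (redistribute M) := by
  refine ⟨fun i => Fin.cases PosSemidef.zero (fun i => ?psd) i, ?sum⟩
  case psd => exact (hM.1 i.succ).add ((hM.1 0).smul (by positivity))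
  case sum =>
    rw [← hM.2, Fin.sum_univ_succ, Fin.sum_univ_succ]
    simp only [redistribute, Fin.cons_zero, Fin.cons_succ, Finset.sum_add_distrib,
      Finset.sum_const, Finset.card_univ, Fintype.card_fin, zero_add]
    rw [← Nat.cast_smul_eq_nsmul ℝ, smul_smul, mul_inv_cancel₀ (by positivity), one_smul,
      add_comm]

theorem pIof_redistribute : PIof q ρ (redistribute M) = 0 := by
  simp [PIof, redistribute]

theorem pbarCor_redistribute :
    PbarCor qv q ρ (redistribute M) = PbarCor qv q ρ M + ((N : ℝ)⁻¹ - qv) * PIof q ρ M := by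
  have hPcor : Pcor q ρ (redistribute M) = Pcor q ρ M + (N : ℝ)⁻¹ * PIof q ρ M := by
    simp only [Pcor, PIof, redistribute, trace_rho0_mul, Fin.cons_succ, Matrix.mul_add,
      Matrix.mul_smul, trace_add, trace_smul, Complex.add_re, Complex.smul_re, Complex.re_sum,
      Complex.re_ofReal_mul, Finset.mul_sum, ← Finset.sum_add_distrib, smul_eq_mul]
    refine Finset.sum_congr rfl fun i _ => by ring
  rw [PbarCor, PbarCor, hPcor, pIof_redistribute]
  ring

theorem IsPOVM.inconclusive_eq_zero_of_pbarCor_eq_pbarOpt (hN : 0 < N) (hlt : qv < 1 / (N : ℝ))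
    (hρ0 : (rho0 q ρ).PosDef) (hM : IsPOVM M)
    (hopt : PbarCor qv q ρ M = PbarOpt qv q ρ) : M 0 = 0 := by
  have hle : PbarCor qv q ρ (redistribute M) ≤ PbarCor qv q ρ M :=
    hopt ▸ isGreatest_pbarOpt.2 ⟨_, isPOVM_redistribute hN hM, rfl⟩
  have hgain : 0 < (N : ℝ)⁻¹ - qv := by rwa [sub_pos, ← one_div]
  rw [pbarCor_redistribute] at hle
  have hPI : PIof q ρ M ≤ 0 := nonpos_of_mul_nonpos_left (by linarith) hgain
  exact inconclusive_eq_zero_of_pIof_eq_zero hρ0 hM (hPI.antisymm (pIof_nonneg hρ0.posSemidef hM))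

theorem stmt3_general {d N : ℕ} (hN : 0 < N)
    (q : Fin N → ℝ) (ρ : Fin N → Matrix (Fin d) (Fin d) ℂ)
    (hρ0 : (rho0 q ρ).PosDef)
    (qv : ℝ) (hlt : qv < 1 / (N : ℝ)) :
    (∀ M : Fin (N + 1) → Matrix (Fin d) (Fin d) ℂ,
        IsPOVM M → PbarCor qv q ρ M = PbarOpt qv q ρ → M 0 = 0) ∧
      PIset qv q ρ = {0} := by
  have hzero : ∀ M : Fin (N + 1) → Matrix (Fin d) (Fin d) ℂ,
      IsPOVM M → PbarCor qv q ρ M = PbarOpt qv q ρ → M 0 = 0 :=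
    fun M hM => hM.inconclusive_eq_zero_of_pbarCor_eq_pbarOpt hN hlt hρ0
  have hPI : ∀ M, IsPOVM M → PbarCor qv q ρ M = PbarOpt qv q ρ → PIof q ρ M = 0 :=
    fun M hM hopt => by simp [PIof, hzero M hM hopt]
  refine ⟨hzero, Set.eq_singleton_iff_unique_mem.mpr ⟨?_, ?_⟩⟩
  · obtain ⟨M, hM, hopt⟩ : ∃ M, IsPOVM M ∧ PbarCor qv q ρ M = PbarOpt qv q ρ :=
      isGreatest_pbarOpt.1
    exact ⟨M, hM, hopt, hPI M hM hopt⟩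
  · rintro _ ⟨M, hM, hopt, rfl⟩
    exact hPI M hM hopt

/-- If `0 < q < 1/N`, then every POVM attaining `P̄_cor^opt(q)`
has `M₀ = 0`; consequently `P_I(q) = {0}`. -/
theorem stmt3 {d N : ℕ} (hd : 0 < d) (hN : 0 < N)
    (q : Fin N → ℝ) (ρ : Fin N → Matrix (Fin d) (Fin d) ℂ)
    (hq : ∀ i, 0 < q i) (hqsum : ∑ i, q i = 1)
    (hρ : ∀ i, (ρ i).PosSemidef) (htr : ∀ i, (ρ i).trace = 1)
    (hρ0 : (rho0 q ρ).PosDef)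
    (qv : ℝ) (hqv : 0 < qv) (hlt : qv < 1 / (N : ℝ)) :
    (∀ M : Fin (N + 1) → Matrix (Fin d) (Fin d) ℂ,
        IsPOVM M → PbarCor qv q ρ M = PbarOpt qv q ρ → M 0 = 0) ∧
      PIset qv q ρ = {0} :=
  stmt3_general hN q ρ hρ0 qv hlt

end FRIR
end
end
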